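/- Let A be a real N×N matrix, let S and U be complementary subspaces of ℝ^N each invariant under A and hence under exp(t·A) for every real t, and suppose there exist c > 0 and μ0 > 0 such that for all t ≥ 0: ‖exp(t·A)·v‖ ≤ c·e^{−μ0·t}·‖v‖ for every v ∈ S, and ‖exp(−t·A)·v‖ ≤ c·e^{−μ0·t}·‖v‖ for every v ∈ U. Let C0 and C1 be real N×N matrices such that the linear map from S × U to ℝ^N sending (a,b) to C0·a + C1·b is bijective. Then there exist T0 > 0 and K > 0 such that for every T ≥ T0, the linear map B_T from S × U to ℝ^N defined by B_T(a,b) = C0·(a + exp(−T·A)·b) + C1·(exp(T·A)·a + b) is bijective, and every (a,b) ∈ S × U satisfies ‖a‖ + ‖b‖ ≤ K·‖B_T(a,b)‖. -/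

import Mathlib

/-!
Write `B_T = B_∞ + P_T` with `B_∞ (a, b) = C0 a + C1 b` and `P_T (a, b) = C0 e^{-TA} b + C1 e^{TA} a`.
`B_∞` is injective, hence bounded below: `‖a‖ + ‖b‖ ≤ K ‖B_∞ (a, b)‖`. The dichotomy estimates make
`P_T` of size `O(e^{-μ0 T})`, so once `K ‖P_T‖ ≤ 1/2` the perturbation is absorbed and
`‖a‖ + ‖b‖ ≤ 2K ‖B_T (a, b)‖`. This makes `B_T` injective, and `B_∞` being bijective gives
`dim (S × U) = N`, so `B_T` is bijective as well.
-/

open Real Matrix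

/-- The Euclidean norm on `ℝ^N`. -/
noncomputable def euclNorm {N : ℕ} (v : Fin N → ℝ) : ℝ :=
  ‖(WithLp.equiv 2 (Fin N → ℝ)).symm v‖

open Filter Topology Function

section euclNorm

variable {n m : ℕ}

theorem euclNorm_nonneg (v : Fin n → ℝ) : 0 ≤ euclNorm v := norm_nonneg _

theorem euclNorm_eq_zero {v : Fin n → ℝ} : euclNorm v = 0 ↔ v = 0 := by
  simp [euclNorm]

theorem euclNorm_add_le (v w : Fin n → ℝ) : euclNorm (v + w) ≤ euclNorm v + euclNorm w :=
  norm_add_le (WithLp.toLp 2 v) (WithLp.toLp 2 w)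

theorem euclNorm_le_euclNorm_add_add (v w : Fin n → ℝ) :
    euclNorm v ≤ euclNorm (v + w) + euclNorm w := by
  simpa [euclNorm] using norm_sub_le (WithLp.toLp 2 (v + w)) (WithLp.toLp 2 w)

theorem exists_euclNorm_map_le (f : (Fin n → ℝ) →ₗ[ℝ] (Fin m → ℝ)) :
    ∃ C, 0 ≤ C ∧ ∀ v, euclNorm (f v) ≤ C * euclNorm v := by
  let g : EuclideanSpace ℝ (Fin n) →L[ℝ] EuclideanSpace ℝ (Fin m) :=
    LinearMap.toContinuousLinearMap ((WithLp.linearEquiv 2 ℝ _).symm.toLinearMap ∘ₗ f ∘ₗ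
      (WithLp.linearEquiv 2 ℝ _).toLinearMap)
  exact ⟨‖g‖, norm_nonneg _, fun v => g.le_opNorm (WithLp.toLp 2 v)⟩

theorem le_two_mul_euclNorm_add {x K ε : ℝ} {u w : Fin n → ℝ} (hx : 0 ≤ x) (hK : 0 ≤ K)
    (hu : x ≤ K * euclNorm u) (hw : euclNorm w ≤ ε * x) (hKε : K * ε ≤ 1 / 2) :
    x ≤ 2 * K * euclNorm (u + w) := by
  have hu' := mul_le_mul_of_nonneg_left (euclNorm_le_euclNorm_add_add u w) hK
  have hw' := mul_le_mul_of_nonneg_left hw hK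
  have hKεx := mul_le_mul_of_nonneg_right hKε hx
  linarith

theorem euclNorm_mulVec_add_mulVec_le {P Q : Matrix (Fin m) (Fin n) ℝ} {kP kQ δ : ℝ}
    (hkP : 0 ≤ kP) (hkQ : 0 ≤ kQ) (hδ : 0 ≤ δ)
    (hP : ∀ v, euclNorm (P *ᵥ v) ≤ kP * euclNorm v) (hQ : ∀ v, euclNorm (Q *ᵥ v) ≤ kQ * euclNorm v)
    {a b x y : Fin n → ℝ} (hx : euclNorm x ≤ δ * euclNorm a) (hy : euclNorm y ≤ δ * euclNorm b) :
    euclNorm (P *ᵥ y + Q *ᵥ x) ≤ (kP + kQ) * δ * (euclNorm a + euclNorm b) := by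
  calc euclNorm (P *ᵥ y + Q *ᵥ x) ≤ kP * euclNorm y + kQ * euclNorm x :=
        (euclNorm_add_le _ _).trans (add_le_add (hP y) (hQ x))
    _ ≤ kP * (δ * euclNorm b) + kQ * (δ * euclNorm a) := by gcongr
    _ ≤ (kP + kQ) * δ * (euclNorm a + euclNorm b) := by
        nlinarith [mul_nonneg (mul_nonneg hkP hδ) (euclNorm_nonneg a),
          mul_nonneg (mul_nonneg hkQ hδ) (euclNorm_nonneg b)]

end euclNorm

theorem eventually_mul_exp_neg_mul_le {μ : ℝ} (hμ : 0 < μ) (C : ℝ) {ε : ℝ} (hε : 0 < ε) :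
    ∀ᶠ T in atTop, C * Real.exp (-μ * T) ≤ ε := by
  have hlim : Tendsto (fun T => C * Real.exp (-μ * T)) atTop (𝓝 0) := by
    simpa using (Real.tendsto_exp_atBot.comp
      (tendsto_id.const_mul_atTop_of_neg (neg_neg_of_pos hμ))).const_mul C
  exact hlim.eventually (ge_mem_nhds hε)

theorem LinearMap.bijective_of_injective_of_bijective {K V W : Type*} [DivisionRing K]
    [AddCommGroup V] [Module K V] [AddCommGroup W] [Module K W] [FiniteDimensional K V]
    [FiniteDimensional K W] {f g : V →ₗ[K] W} (hf : Bijective f) (hg : Injective g) :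
    Bijective g :=
  ⟨hg, (injective_iff_surjective_of_finrank_eq_finrank
    (LinearEquiv.ofBijective f hf).finrank_eq).1 hg⟩

section boundaryMap

variable {N m : ℕ} (S U : Submodule ℝ (Fin N → ℝ))

noncomputable def boundaryMap (M0 M1 : Matrix (Fin m) (Fin N) ℝ) : S × U →ₗ[ℝ] (Fin m → ℝ) :=
  M0.mulVecLin ∘ₗ S.subtype ∘ₗ LinearMap.fst ℝ S U + M1.mulVecLin ∘ₗ U.subtype ∘ₗ LinearMap.snd ℝ S U

@[simp]
theorem boundaryMap_apply (M0 M1 : Matrix (Fin m) (Fin N) ℝ) (p : S × U) :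
    boundaryMap S U M0 M1 p = M0 *ᵥ p.1 + M1 *ᵥ p.2 := rfl

theorem boundaryMap_add_mul_apply (M0 M1 : Matrix (Fin m) (Fin N) ℝ)
    (E E' : Matrix (Fin N) (Fin N) ℝ) (p : S × U) :
    boundaryMap S U (M0 + M1 * E) (M0 * E' + M1) p
      = M0 *ᵥ (p.1 + E' *ᵥ p.2) + M1 *ᵥ (E *ᵥ p.1 + p.2) := by
  simp only [boundaryMap_apply, add_mulVec, mulVec_add, ← mulVec_mulVec]
  abel

theorem mulVec_add_add_mulVec_add (M0 M1 : Matrix (Fin m) (Fin N) ℝ)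
    (E E' : Matrix (Fin N) (Fin N) ℝ) (p : S × U) :
    M0 *ᵥ (p.1 + E' *ᵥ p.2) + M1 *ᵥ (E *ᵥ p.1 + p.2)
      = boundaryMap S U M0 M1 p + (M0 *ᵥ (E' *ᵥ p.2) + M1 *ᵥ (E *ᵥ p.1)) := by
  simp only [boundaryMap_apply, mulVec_add]
  abel

theorem exists_euclNorm_add_le_of_injective (L : S × U →ₗ[ℝ] (Fin m → ℝ)) (hL : Injective L) :
    ∃ K > 0, ∀ p : S × U,
      euclNorm (p.1 : Fin N → ℝ) + euclNorm (p.2 : Fin N → ℝ) ≤ K * euclNorm (L p) := by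
  obtain ⟨g, hg⟩ := L.exists_leftInverse_of_injective (LinearMap.ker_eq_bot.2 hL)
  obtain ⟨Ca, hCa, ha⟩ := exists_euclNorm_map_le (S.subtype ∘ₗ LinearMap.fst ℝ S U ∘ₗ g)
  obtain ⟨Cb, hCb, hb⟩ := exists_euclNorm_map_le (U.subtype ∘ₗ LinearMap.snd ℝ S U ∘ₗ g)
  refine ⟨Ca + Cb + 1, by positivity, fun p => ?_⟩
  have hgp : g (L p) = p := LinearMap.congr_fun hg p
  have h1 := ha (L p)
  have h2 := hb (L p)
  simp only [LinearMap.comp_apply, hgp, LinearMap.fst_apply, LinearMap.snd_apply,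
    Submodule.coe_subtype] at h1 h2
  nlinarith [euclNorm_nonneg (L p)]

theorem injective_of_euclNorm_add_le {L : S × U →ₗ[ℝ] (Fin m → ℝ)} {K : ℝ}
    (hL : ∀ p : S × U,
      euclNorm (p.1 : Fin N → ℝ) + euclNorm (p.2 : Fin N → ℝ) ≤ K * euclNorm (L p)) :
    Injective L := by
  refine (injective_iff_map_eq_zero L).2 fun p hp => ?_
  have hsum := hL p
  rw [hp, euclNorm_eq_zero.2 rfl, mul_zero] at hsum
  obtain ⟨h1, h2⟩ := (add_eq_zero_iff_of_nonneg (euclNorm_nonneg _) (euclNorm_nonneg _)).1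
    (le_antisymm hsum (add_nonneg (euclNorm_nonneg _) (euclNorm_nonneg _)))
  exact Prod.ext (Subtype.ext (euclNorm_eq_zero.1 h1)) (Subtype.ext (euclNorm_eq_zero.1 h2))

end boundaryMap

theorem stmt17_general (N : ℕ) (A : Matrix (Fin N) (Fin N) ℝ)
    (S U : Submodule ℝ (Fin N → ℝ))
    (c μ0 : ℝ) (hc : 0 < c) (hμ0 : 0 < μ0)
    (hSdec : ∀ t ≥ (0:ℝ), ∀ v ∈ S,
      euclNorm ((NormedSpace.exp (t • A)).mulVec v) ≤ c * Real.exp (-μ0 * t) * euclNorm v)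
    (hUdec : ∀ t ≥ (0:ℝ), ∀ v ∈ U,
      euclNorm ((NormedSpace.exp (-t • A)).mulVec v) ≤ c * Real.exp (-μ0 * t) * euclNorm v)
    (C0 C1 : Matrix (Fin N) (Fin N) ℝ)
    (hadm : Function.Bijective
      (fun p : S × U => C0.mulVec (p.1 : Fin N → ℝ) + C1.mulVec (p.2 : Fin N → ℝ))) :
    ∃ T0 > (0:ℝ), ∃ K > (0:ℝ), ∀ T ≥ T0,
      Function.Bijective
        (fun p : S × U =>
          C0.mulVec ((p.1 : Fin N → ℝ) + (NormedSpace.exp (-T • A)).mulVec (p.2 : Fin N → ℝ))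
          + C1.mulVec ((NormedSpace.exp (T • A)).mulVec (p.1 : Fin N → ℝ) + (p.2 : Fin N → ℝ))) ∧
      ∀ p : S × U,
        euclNorm (p.1 : Fin N → ℝ) + euclNorm (p.2 : Fin N → ℝ)
          ≤ K * euclNorm
              (C0.mulVec ((p.1 : Fin N → ℝ) + (NormedSpace.exp (-T • A)).mulVec (p.2 : Fin N → ℝ))
               + C1.mulVec ((NormedSpace.exp (T • A)).mulVec (p.1 : Fin N → ℝ) + (p.2 : Fin N → ℝ))) := by
  obtain ⟨K, hK, hB⟩ := exists_euclNorm_add_le_of_injective S U (boundaryMap S U C0 C1) hadm.1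
  obtain ⟨k0, hk0, hC0⟩ := exists_euclNorm_map_le C0.mulVecLin
  obtain ⟨k1, hk1, hC1⟩ := exists_euclNorm_map_le C1.mulVecLin
  obtain ⟨T0, hT0⟩ := eventually_atTop.1 <|
    eventually_mul_exp_neg_mul_le hμ0 (K * ((k0 + k1) * c)) (by norm_num : (0:ℝ) < 1 / 2)
  refine ⟨max T0 1, by positivity, 2 * K, by positivity, fun T hT => ?_⟩
  have hT1 : 0 ≤ T := zero_le_one.trans (le_of_max_le_right hT)
  have hbound : ∀ p : S × U,
      euclNorm (p.1 : Fin N → ℝ) + euclNorm (p.2 : Fin N → ℝ) ≤ 2 * K * euclNorm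
        (C0 *ᵥ (p.1 + NormedSpace.exp (-T • A) *ᵥ p.2)
          + C1 *ᵥ (NormedSpace.exp (T • A) *ᵥ p.1 + p.2)) := by
    intro p
    rw [mulVec_add_add_mulVec_add]
    refine le_two_mul_euclNorm_add (add_nonneg (euclNorm_nonneg _) (euclNorm_nonneg _)) hK.le
      (hB p) (euclNorm_mulVec_add_mulVec_le hk0 hk1 (by positivity) hC0 hC1
        (hSdec T hT1 _ p.1.2) (hUdec T hT1 _ p.2.2)) ?_
    linarith [hT0 T (le_of_max_le_left hT)]
  -- `B_T` is the linear map `boundaryMap S U (C0 + C1 * exp (T • A)) (C0 * exp (-T • A) + C1)`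
  simp_rw [← boundaryMap_add_mul_apply] at hbound ⊢
  exact ⟨LinearMap.bijective_of_injective_of_bijective (f := boundaryMap S U C0 C1) hadm
    (injective_of_euclNorm_add_le S U hbound), hbound⟩

/-- uniform invertibility of the boundary map.  Under the hyperbolic
splitting and admissibility hypotheses, for every large `T` the map
`B_T(a,b) = C0·(a + exp(−TA)·b) + C1·(exp(TA)·a + b)` from `S × U` to `ℝ^N` is bijective,
with `‖a‖ + ‖b‖ ≤ K·‖B_T(a,b)‖` uniformly in `T`. -/
theorem stmt17 (N : ℕ) (A : Matrix (Fin N) (Fin N) ℝ)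
    (S U : Submodule ℝ (Fin N → ℝ)) (hSU : IsCompl S U)
    (hSinv : ∀ v ∈ S, A.mulVec v ∈ S) (hUinv : ∀ v ∈ U, A.mulVec v ∈ U)
    (c μ0 : ℝ) (hc : 0 < c) (hμ0 : 0 < μ0)
    (hSdec : ∀ t ≥ (0:ℝ), ∀ v ∈ S,
      euclNorm ((NormedSpace.exp (t • A)).mulVec v) ≤ c * Real.exp (-μ0 * t) * euclNorm v)
    (hUdec : ∀ t ≥ (0:ℝ), ∀ v ∈ U,
      euclNorm ((NormedSpace.exp (-t • A)).mulVec v) ≤ c * Real.exp (-μ0 * t) * euclNorm v)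
    (C0 C1 : Matrix (Fin N) (Fin N) ℝ)
    (hadm : Function.Bijective
      (fun p : S × U => C0.mulVec (p.1 : Fin N → ℝ) + C1.mulVec (p.2 : Fin N → ℝ))) :
    ∃ T0 > (0:ℝ), ∃ K > (0:ℝ), ∀ T ≥ T0,
      Function.Bijective
        (fun p : S × U =>
          C0.mulVec ((p.1 : Fin N → ℝ) + (NormedSpace.exp (-T • A)).mulVec (p.2 : Fin N → ℝ))
          + C1.mulVec ((NormedSpace.exp (T • A)).mulVec (p.1 : Fin N → ℝ) + (p.2 : Fin N → ℝ))) ∧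
      ∀ p : S × U,
        euclNorm (p.1 : Fin N → ℝ) + euclNorm (p.2 : Fin N → ℝ)
          ≤ K * euclNorm
              (C0.mulVec ((p.1 : Fin N → ℝ) + (NormedSpace.exp (-T • A)).mulVec (p.2 : Fin N → ℝ))
               + C1.mulVec ((NormedSpace.exp (T • A)).mulVec (p.1 : Fin N → ℝ) + (p.2 : Fin N → ℝ))) :=
  stmt17_general N A S U c μ0 hc hμ0 hSdec hUdec C0 C1 hadm
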